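/- Fix a time t, a mid-price s* ∈ ℝ, and a wealth level w ∈ ℝ. Let v : ℝ → ℝ be continuous, let U : ℝ³ → ℝ be continuously differentiable with partial derivatives U_t, U_L, U_C, and for B ≥ 0 set L(B) = ∫_{s*}^{s*+B} v(S) dS and C(B) = w − ∫_{s*}^{s*+B} S·v(S) dS. Suppose B* > 0 is a local maximum of the function F(B) := U(t, L(B), C(B)), that v(s*+B*) ≠ 0, and that U_C(t, L(B*), C(B*)) ≠ 0. Then s* + B* = U_L(t, L(B*), C(B*)) / U_C(t, L(B*), C(B*)); that is, the optimal highest limit price to buy the asset equals the ratio of the marginal utility of amount of asset to the marginal utility of consumption. -/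

import Mathlib

/-! By the fundamental theorem of calculus `L' = v(s* + B)` and `C' = -(s* + B) v(s* + B)`, so the
chain rule gives `F' = (U_L - (s* + B) U_C) v(s* + B)`. Fermat's theorem makes this vanish at the
local maximum `B*`, and cancelling `v(s* + B*)` and `U_C` leaves `s* + B* = U_L / U_C`. -/

open ContinuousLinearMap

theorem Continuous.hasDerivAt_integral_const_add {E : Type*} [NormedAddCommGroup E]
    [NormedSpace ℝ E] [CompleteSpace E] {f : ℝ → E} (hf : Continuous f) (a b : ℝ) :
    HasDerivAt (fun u => ∫ x in a..(a + u), f x) (f (a + b)) b := by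
  simpa [Function.comp_def] using
    (hf.integral_hasStrictDerivAt a (a + b)).hasDerivAt.scomp b ((hasDerivAt_id b).const_add a)

theorem HasFDerivAt.hasDerivAt_comp_const_prodMk {f : ℝ × ℝ × ℝ → ℝ} {a b c t x' y' u : ℝ}
    {x y : ℝ → ℝ}
    (hf : HasFDerivAt f (a • fst ℝ ℝ (ℝ × ℝ) + b • (fst ℝ ℝ ℝ).comp (snd ℝ ℝ (ℝ × ℝ)) +
      c • (snd ℝ ℝ ℝ).comp (snd ℝ ℝ (ℝ × ℝ))) (t, x u, y u))
    (hx : HasDerivAt x x' u) (hy : HasDerivAt y y' u) :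
    HasDerivAt (fun u => f (t, x u, y u)) (b * x' + c * y') u := by
  refine (hf.comp_hasDerivAt u ((hasDerivAt_const u t).prodMk (hx.prodMk hy))).congr_deriv ?_
  simp

theorem eq_div_of_sub_mul_mul_eq_zero {K : Type*} [Field K] {p b c v : K}
    (h : (b - p * c) * v = 0) (hv : v ≠ 0) (hc : c ≠ 0) : p = b / c := by
  rw [eq_div_iff hc, eq_comm, ← sub_eq_zero]
  exact (mul_eq_zero.1 h).resolve_right hv

theorem limit_order_static_optimality_general
    (t sStar w : ℝ) (v : ℝ → ℝ) (hv : Continuous v)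
    (U Ut UL UC : ℝ → ℝ → ℝ → ℝ)
    (hU : ∀ p : ℝ × ℝ × ℝ, HasFDerivAt (fun q : ℝ × ℝ × ℝ => U q.1 q.2.1 q.2.2)
      (Ut p.1 p.2.1 p.2.2 • (ContinuousLinearMap.fst ℝ ℝ (ℝ × ℝ)) +
       UL p.1 p.2.1 p.2.2 •
         ((ContinuousLinearMap.fst ℝ ℝ ℝ).comp (ContinuousLinearMap.snd ℝ ℝ (ℝ × ℝ))) +
       UC p.1 p.2.1 p.2.2 •
         ((ContinuousLinearMap.snd ℝ ℝ ℝ).comp (ContinuousLinearMap.snd ℝ ℝ (ℝ × ℝ)))) p)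
    (L C F : ℝ → ℝ)
    (hL : ∀ B, L B = ∫ S in sStar..(sStar + B), v S)
    (hC : ∀ B, C B = w - ∫ S in sStar..(sStar + B), S * v S)
    (hF : ∀ B, F B = U t (L B) (C B))
    (Bstar : ℝ) (hmax : IsLocalMax F Bstar)
    (hv0 : v (sStar + Bstar) ≠ 0)
    (hUC0 : UC t (L Bstar) (C Bstar) ≠ 0) :
    sStar + Bstar = UL t (L Bstar) (C Bstar) / UC t (L Bstar) (C Bstar) := by
  set p := sStar + Bstar
  have hL' : HasDerivAt L (v p) Bstar := by
    rw [funext hL]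
    exact hv.hasDerivAt_integral_const_add sStar Bstar
  have hC' : HasDerivAt C (-(p * v p)) Bstar := by
    rw [funext hC]
    exact ((continuous_id.mul hv).hasDerivAt_integral_const_add sStar Bstar).const_sub w
  have hF' : HasDerivAt F
      ((UL t (L Bstar) (C Bstar) - p * UC t (L Bstar) (C Bstar)) * v p) Bstar := by
    rw [funext hF]
    convert (hU (t, L Bstar, C Bstar)).hasDerivAt_comp_const_prodMk hL' hC' using 1
    ring
  exact eq_div_of_sub_mul_mul_eq_zero (hmax.hasDerivAt_eq_zero hF') hv0 hUC0

/-- static optimization, Theorem 4.1: at an interior local maximum `B* > 0`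
of `F(B) = U(t, L(B), C(B))` with `v(s*+B*) ≠ 0` and `U_C ≠ 0` there,
the optimal highest limit price satisfies `s* + B* = U_L / U_C`. -/
theorem limit_order_static_optimality
    (t sStar w : ℝ) (v : ℝ → ℝ) (hv : Continuous v)
    (U Ut UL UC : ℝ → ℝ → ℝ → ℝ)
    (hU : ∀ p : ℝ × ℝ × ℝ, HasFDerivAt (fun q : ℝ × ℝ × ℝ => U q.1 q.2.1 q.2.2)
      (Ut p.1 p.2.1 p.2.2 • (ContinuousLinearMap.fst ℝ ℝ (ℝ × ℝ)) +
       UL p.1 p.2.1 p.2.2 •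
         ((ContinuousLinearMap.fst ℝ ℝ ℝ).comp (ContinuousLinearMap.snd ℝ ℝ (ℝ × ℝ))) +
       UC p.1 p.2.1 p.2.2 •
         ((ContinuousLinearMap.snd ℝ ℝ ℝ).comp (ContinuousLinearMap.snd ℝ ℝ (ℝ × ℝ)))) p)
    (hUt : Continuous fun p : ℝ × ℝ × ℝ => Ut p.1 p.2.1 p.2.2)
    (hUL : Continuous fun p : ℝ × ℝ × ℝ => UL p.1 p.2.1 p.2.2)
    (hUC : Continuous fun p : ℝ × ℝ × ℝ => UC p.1 p.2.1 p.2.2)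
    (L C F : ℝ → ℝ)
    (hL : ∀ B, L B = ∫ S in sStar..(sStar + B), v S)
    (hC : ∀ B, C B = w - ∫ S in sStar..(sStar + B), S * v S)
    (hF : ∀ B, F B = U t (L B) (C B))
    (Bstar : ℝ) (hBstar : 0 < Bstar) (hmax : IsLocalMax F Bstar)
    (hv0 : v (sStar + Bstar) ≠ 0)
    (hUC0 : UC t (L Bstar) (C Bstar) ≠ 0) :
    sStar + Bstar = UL t (L Bstar) (C Bstar) / UC t (L Bstar) (C Bstar) :=
  limit_order_static_optimality_general t sStar w v hv U Ut UL UC hU L C F hL hC hF Bstar hmax hv0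
    hUC0
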